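/- Let U be an open subset of R^d, let m >= 1 be an integer, and let f: U -> R be m times continuously differentiable with f(x) >= a_1 > 0 for all x in U and with all partial derivatives of order at most m bounded in absolute value by M < infinity on U. Then sqrt(f) is m times continuously differentiable on U, and there exists a constant kappa < infinity depending only on m, d, M and a_1 such that all partial derivatives of sqrt(f) of order at most m are bounded in absolute value by kappa on U. -/

import Mathlib

open MeasureTheory ProbabilityTheory Real Filter
open scoped BigOperators ENNReal RealInnerProductSpace

noncomputable section

abbrev EucSp (d : ℕ) := EuclideanSpace ℝ (Fin d)

/-- `c₀ = π^{d/2}/Γ(d/2+1)`, the volume of the unit Euclidean ball in `ℝ^d`. -/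
def ballVolConst (d : ℕ) : ℝ := Real.pi ^ ((d : ℝ) / 2) / Real.Gamma ((d : ℝ) / 2 + 1)

/-- The distance from `X i` to its `k`-th nearest neighbour among the other sample points. -/
def kNNdist {d n : ℕ} (X : Fin n → EucSp d) (k : ℕ) (i : Fin n) : ℝ :=
  sInf {r : ℝ | 0 ≤ r ∧ k ≤ (Finset.univ.filter fun j => j ≠ i ∧ dist (X j) (X i) ≤ r).card}

/-- `V_{(k);i}`: the volume of the smallest closed ball centred at `X i` containing at least
`k` other observations. -/
def nnVol {d n : ℕ} (X : Fin n → EucSp d) (k : ℕ) (i : Fin n) : ℝ :=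
  ballVolConst d * kNNdist X k i ^ d

/-- Assumption 3 of the paper: `f` is a density with convex compact support `C`, bounded and
bounded away from `0` on `C`, differentiable with uniformly bounded first-order derivatives. -/
structure NiceDensity (d : ℕ) (f : EucSp d → ℝ) (C : Set (EucSp d)) (a₁ a₂ : ℝ) : Prop where
  meas : Measurable f
  nonneg : ∀ x, 0 ≤ f x
  conv : Convex ℝ C
  cpt : IsCompact C
  suppC : ∀ x, x ∉ C → f x = 0
  a1pos : 0 < a₁
  lb : ∀ x ∈ C, a₁ ≤ f x
  ub : ∀ x ∈ C, f x ≤ a₂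
  diff : DifferentiableOn ℝ f C
  bddDeriv : ∃ M : ℝ, ∀ x ∈ C, ‖fderivWithin ℝ f C x‖ ≤ M

/-- `X 0, X 1, ...` is an i.i.d. sequence with common density `f`. -/
def IsSampleFrom {Ω : Type} [MeasurableSpace Ω] (P : Measure Ω) {d : ℕ}
    (X : ℕ → Ω → EucSp d) (f : EucSp d → ℝ) : Prop :=
  (∀ i, Measurable (X i)) ∧
    iIndepFun X P ∧
    ∀ i, Measure.map (X i) P = volume.withDensity fun x => ENNReal.ofReal (f x)

/-- The vector of `ℝ^d` with integer coordinates `z`. -/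
def intVec {d : ℕ} (z : Fin d → ℤ) : EucSp d := WithLp.toLp 2 (fun i => (z i : ℝ))

/-- `φ_{j,z}(x) = 2^{dj/2} φ(2^j x - z)`. -/
def waveScaled {d : ℕ} (φ : EucSp d → ℝ) (j : ℕ) (z : Fin d → ℤ) (x : EucSp d) : ℝ :=
  (2 : ℝ) ^ (((d : ℝ) * j) / 2) * φ ((2 : ℝ) ^ j • x - intVec z)

/-- Bounded, compactly supported, measurable. -/
structure NiceWavelet (d : ℕ) (φ : EucSp d → ℝ) : Prop where
  meas : Measurable φ
  bdd : ∃ B : ℝ, ∀ x, |φ x| ≤ B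
  cpt : HasCompactSupport φ

/-- The wavelet family `{φ_{j₀,z}} ∪ {ψ^{(q)}_{j,z} : j ≥ j₀}`. -/
def wfam {d : ℕ} (φ : EucSp d → ℝ) (ψ : Fin (2 ^ d - 1) → EucSp d → ℝ) (j₀ : ℕ) :
    (Fin d → ℤ) ⊕ (ℕ × (Fin d → ℤ) × Fin (2 ^ d - 1)) → EucSp d → ℝ
  | Sum.inl z => waveScaled φ j₀ z
  | Sum.inr (j, z, q) => waveScaled (ψ q) (j₀ + j) z

/-- The wavelet family is an orthonormal basis of `L²(ℝ^d)`: orthonormality plus totality. -/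
def IsWaveletONB {d : ℕ} (φ : EucSp d → ℝ) (ψ : Fin (2 ^ d - 1) → EucSp d → ℝ) (j₀ : ℕ) : Prop :=
  (∀ u, ∫ x, wfam φ ψ j₀ u x * wfam φ ψ j₀ u x = 1) ∧
    (∀ u v, u ≠ v → ∫ x, wfam φ ψ j₀ u x * wfam φ ψ j₀ v x = 0) ∧
    ∀ g : EucSp d → ℝ, Measurable g → Integrable (fun x => g x ^ 2) →
      (∀ u, ∫ x, wfam φ ψ j₀ u x * g x = 0) → g =ᵐ[volume] 0

/-- The estimated wavelet coefficient of `√f` built on the `k`-nearest-neighbour ball volumes: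
`(Γ(k)/Γ(k+1/2)) n^{-1/2} ∑_i g_{j,z}(X_i) √V_{(k);i}`. -/
def coefHat {d n : ℕ} (g : EucSp d → ℝ) (k j : ℕ) (z : Fin d → ℤ)
    (xs : Fin n → EucSp d) : ℝ :=
  (Real.Gamma k / Real.Gamma (k + 1 / 2)) * (1 / Real.sqrt n) *
    ∑ i, waveScaled g j z (xs i) * Real.sqrt (nnVol xs k i)

/-- The true wavelet coefficient of `√f`. -/
def coefTrue {d : ℕ} (g : EucSp d → ℝ) (j : ℕ) (z : Fin d → ℤ) (f : EucSp d → ℝ) : ℝ :=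
  ∫ x, waveScaled g j z x * Real.sqrt (f x)

/-- The square-root density estimator `ĝ_J` at resolution `J ≥ j₀`. -/
def gHat {d n : ℕ} (φ : EucSp d → ℝ) (ψ : Fin (2 ^ d - 1) → EucSp d → ℝ)
    (j₀ J k : ℕ) (xs : Fin n → EucSp d) (x : EucSp d) : ℝ :=
  (∑' z : Fin d → ℤ, coefHat φ k j₀ z xs * waveScaled φ j₀ z x) +
    ∑ j ∈ Finset.Icc j₀ J, ∑' z : Fin d → ℤ, ∑ q, coefHat (ψ q) k j z xs * waveScaled (ψ q) j z x

/-- The approximating kernel `K(x,y) = ∑_{z ∈ ℤ^d} φ(x-z) φ(y-z)`. -/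
def wKernel {d : ℕ} (φ : EucSp d → ℝ) (x y : EucSp d) : ℝ :=
  ∑' z : Fin d → ℤ, φ (x - intVec z) * φ (y - intVec z)

/-- The refinement `K_j(x,y) = 2^{dj} K(2^j x, 2^j y)`. -/
def wKernelJ {d : ℕ} (φ : EucSp d → ℝ) (j : ℕ) (x y : EucSp d) : ℝ :=
  (2 : ℝ) ^ (d * j) * wKernel φ ((2 : ℝ) ^ j • x) ((2 : ℝ) ^ j • y)

/-- First-order partial derivative in direction `i`, within the set `C`. -/
def pderivOn {d : ℕ} (C : Set (EucSp d)) (i : Fin d) (f : EucSp d → ℝ) : EucSp d → ℝ :=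
  fun x => fderivWithin ℝ f C x (EuclideanSpace.single i 1)

/-- Iterated partial derivatives along a list of coordinate directions. -/
def pderivList {d : ℕ} (C : Set (EucSp d)) : List (Fin d) → (EucSp d → ℝ) → EucSp d → ℝ
  | [], f => f
  | i :: t, f => pderivList C t (pderivOn C i f)

/-- The list of directions associated with a multi-index `α`. -/
def multiIndexList {d : ℕ} (α : Fin d → ℕ) : List (Fin d) :=
  (List.finRange d).flatMap fun i => List.replicate (α i) i

/-- `D^α f`, the `α`-th mixed partial derivative (multi-index notation) within `C`. -/
def pderivMulti {d : ℕ} (C : Set (EucSp d)) (α : Fin d → ℕ) (f : EucSp d → ℝ) : EucSp d → ℝ :=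
  pderivList C (multiIndexList α) f

/-- The Sobolev norm `∑_{|α| ≤ m} ‖D^α f‖_{L²(C)}`. -/
def sobNorm (d m : ℕ) (C : Set (EucSp d)) (f : EucSp d → ℝ) : ℝ :=
  ∑ α ∈ (Fintype.piFinset fun _ : Fin d => Finset.range (m + 1)).filter
      (fun α => ∑ i, α i ≤ m),
    Real.sqrt (∫ x in C, (pderivMulti C α f x) ^ 2)

/-- The ball `B^{m,2}(L)`: densities satisfying Assumption 3 which are `m` times continuously
differentiable on `C` with Sobolev norm at most `L`. -/
def InSobBall (d m : ℕ) (L : ℝ) (C : Set (EucSp d)) (a₁ a₂ : ℝ) (f : EucSp d → ℝ) : Prop :=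
  NiceDensity d f C a₁ a₂ ∧ ContDiffOn ℝ m f C ∧ sobNorm d m C f ≤ L

/-- Assumption 4 of the paper on the approximating kernel. -/
structure KernelAssumption (d m : ℕ) (φ : EucSp d → ℝ) (F : EucSp d → ℝ) : Prop where
  Fmeas : Measurable F
  Fsq : Integrable fun x => F x ^ 2
  domin : ∀ x y, |wKernel φ x y| ≤ F (x - y)
  moments : ∀ ν : Fin d → ℕ, (∑ i, ν i) = m →
    Integrable fun x => (∏ i, |x i| ^ ν i) * F x
  repro : ∀ x : EucSp d, ∀ ν : Fin d → ℕ, (∑ i, ν i) ≤ m - 1 →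
    (∫ y, (∏ i, (y i - x i) ^ ν i) * wKernel φ x y) = if ν = 0 then 1 else 0


namespace Stmt14Aux

variable {d : ℕ}

/-- A symbolic term: coefficient, exponent index `k` (for `f ^ (1/2 - k)`),
and a list of derivative multi-lists applied to `f`. -/
abbrev Term (d : ℕ) := ℝ × ℕ × List (List (Fin d))

def prodL (U : Set (EucSp d)) (f : EucSp d → ℝ) (L : List (List (Fin d))) (x : EucSp d) : ℝ :=
  (L.map fun l => pderivList U l f x).prod

def tval (U : Set (EucSp d)) (f : EucSp d → ℝ) (t : Term d) (x : EucSp d) : ℝ :=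
  t.1 * (f x ^ ((1 : ℝ) / 2 - (t.2.1 : ℝ)) * prodL U f t.2.2 x)

def eval (U : Set (EucSp d)) (f : EucSp d → ℝ) (e : List (Term d)) (x : EucSp d) : ℝ :=
  (e.map fun t => tval U f t x).sum

def stepL (i : Fin d) : List (List (Fin d)) → List (List (List (Fin d)))
  | [] => []
  | l :: L => ((l ++ [i]) :: L) :: (stepL i L).map fun L' => l :: L'

def stepT (i : Fin d) (t : Term d) : List (Term d) :=
  (t.1 * ((1 : ℝ) / 2 - (t.2.1 : ℝ)), t.2.1 + 1, [i] :: t.2.2) ::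
    (stepL i t.2.2).map fun L' => (t.1, t.2.1, L')

def stepE (i : Fin d) (e : List (Term d)) : List (Term d) := e.flatMap (stepT i)

def run : List (Fin d) → List (Term d) → List (Term d)
  | [], e => e
  | i :: l, e => run l (stepE i e)

def GoodT (n : ℕ) (t : Term d) : Prop :=
  t.2.1 ≤ n ∧ t.2.2.length ≤ n ∧ ∀ l ∈ t.2.2, l.length ≤ n

def Good (n : ℕ) (e : List (Term d)) : Prop := ∀ t ∈ e, GoodT n t

def esum (e : List (Term d)) : ℝ := (e.map fun t => |t.1|).sum

lemma esum_nonneg (e : List (Term d)) : 0 ≤ esum e := by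
  apply List.sum_nonneg; intro y hy
  simp only [List.mem_map] at hy
  obtain ⟨t, -, rfl⟩ := hy; exact abs_nonneg _

lemma GoodT.mono {n n' : ℕ} (h : n ≤ n') {t : Term d} (ht : GoodT n t) : GoodT n' t :=
  ⟨ht.1.trans h, ht.2.1.trans h, fun l hl => (ht.2.2 l hl).trans h⟩

lemma stepL_length (i : Fin d) (L : List (List (Fin d))) : (stepL i L).length = L.length := by
  induction L with
  | nil => rfl
  | cons l L ih => simp [stepL, ih]

lemma stepL_mem (i : Fin d) {L : List (List (Fin d))} {L' : List (List (Fin d))}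
    (h : L' ∈ stepL i L) : L'.length = L.length ∧
      ∀ l' ∈ L', l' ∈ L ∨ ∃ l ∈ L, l' = l ++ [i] := by
  induction L generalizing L' with
  | nil => simp [stepL] at h
  | cons l L ih =>
    simp only [stepL, List.mem_cons, List.mem_map] at h
    rcases h with rfl | ⟨L'', hL'', rfl⟩
    · refine ⟨by simp, ?_⟩
      intro l' hl'
      rcases List.mem_cons.1 hl' with rfl | hl'
      · exact Or.inr ⟨l, by simp⟩
      · exact Or.inl (List.mem_cons_of_mem _ hl')
    · obtain ⟨h1, h2⟩ := ih hL''
      refine ⟨by simp [h1], ?_⟩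
      intro l' hl'
      rcases List.mem_cons.1 hl' with rfl | hl'
      · exact Or.inl (List.mem_cons_self)
      · rcases h2 l' hl' with h | ⟨l₀, hl₀, rfl⟩
        · exact Or.inl (List.mem_cons_of_mem _ h)
        · exact Or.inr ⟨l₀, List.mem_cons_of_mem _ hl₀, rfl⟩

lemma goodT_stepT {n : ℕ} {t : Term d} (ht : GoodT n t) (i : Fin d) :
    ∀ t' ∈ stepT i t, GoodT (n + 1) t' := by
  obtain ⟨c, k, L⟩ := t
  obtain ⟨hk, hL, hl⟩ := ht
  intro t' ht'
  simp only [stepT, List.mem_cons, List.mem_map] at ht'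
  rcases ht' with rfl | ⟨L', hL', rfl⟩
  · refine ⟨Nat.succ_le_succ hk, by simpa using Nat.succ_le_succ hL, ?_⟩
    intro l' hl'
    rcases List.mem_cons.1 hl' with rfl | hl'
    · simp
    · exact (hl l' hl').trans (Nat.le_succ n)
  · obtain ⟨h1, h2⟩ := stepL_mem i hL'
    refine ⟨hk.trans (Nat.le_succ n), ?_, ?_⟩
    · show L'.length ≤ n + 1
      rw [h1]
      exact Nat.le_trans hL (Nat.le_succ n)
    intro l' hl'
    rcases h2 l' hl' with h | ⟨l₀, hl₀, rfl⟩
    · exact (hl l' h).trans (Nat.le_succ n)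
    · simpa using Nat.succ_le_succ (hl l₀ hl₀)

lemma good_stepE {n : ℕ} {e : List (Term d)} (he : Good n e) (i : Fin d) :
    Good (n + 1) (stepE i e) := by
  intro t' ht'
  simp only [stepE, List.mem_flatMap] at ht'
  obtain ⟨t, ht, ht'⟩ := ht'
  exact goodT_stepT (he t ht) i t' ht'

lemma good_run {e : List (Term d)} :
    ∀ (l : List (Fin d)) {n : ℕ}, Good n e → Good (n + l.length) (run l e) := by
  intro l
  induction l generalizing e with
  | nil => intro n h; simpa [run] using h
  | cons i l ih =>
    intro n h
    have := ih (good_stepE h i)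
    simpa [run, Nat.add_comm, Nat.add_assoc, Nat.add_left_comm] using this

lemma esum_stepT {m n : ℕ} (hnm : n ≤ m) {t : Term d} (ht : GoodT n t) (i : Fin d) :
    esum (stepT i t) ≤ (2 * m + 1) * |t.1| := by
  obtain ⟨c, k, L⟩ := t
  obtain ⟨hk, hL, -⟩ := ht
  have hmap : ((stepL i L).map fun L' => |(((c, k, L') : Term d)).1|).sum
      = (L.length : ℝ) * |c| := by
    have h0 : ((stepL i L).map fun L' => |(((c, k, L') : Term d)).1|)
        = ((stepL i L).map fun _ => |c|) := List.map_congr_left fun L' _ => rfl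
    have h1 : ((stepL i L).map fun _ => |c|) = List.replicate (stepL i L).length |c| := by
      induction stepL i L with
      | nil => rfl
      | cons a S ih => simp [ih, List.replicate_succ]
    rw [h0, h1, List.sum_replicate, stepL_length]
    simp [nsmul_eq_mul]
  simp only [esum, stepT, List.map_cons, List.sum_cons, List.map_map]
  have : ((stepL i L).map ((fun t : Term d => |t.1|) ∘ fun L' => ((c, k, L') : Term d))).sum
      = (L.length : ℝ) * |c| := hmap
  rw [this, abs_mul]
  have h1 : |(1 : ℝ) / 2 - (k : ℝ)| ≤ (m : ℝ) + 1 := by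
    have hk1 : (k : ℝ) ≤ m := by exact_mod_cast hk.trans hnm
    have hk0 : (0 : ℝ) ≤ k := Nat.cast_nonneg k
    rw [abs_le]
    constructor <;> linarith
  have h2 : (L.length : ℝ) ≤ m := by exact_mod_cast hL.trans hnm
  have habs : (0 : ℝ) ≤ |c| := abs_nonneg c
  nlinarith [abs_nonneg ((1:ℝ)/2 - (k:ℝ))]

lemma esum_stepE {m n : ℕ} (hnm : n ≤ m) {e : List (Term d)} (he : Good n e) (i : Fin d) :
    esum (stepE i e) ≤ (2 * m + 1) * esum e := by
  induction e with
  | nil => simp [stepE, esum]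
  | cons t e ih =>
    have he' : Good n e := fun t' ht' => he t' (List.mem_cons_of_mem _ ht')
    have hces : esum (stepE i (t :: e)) = esum (stepT i t) + esum (stepE i e) := by
      simp [stepE, esum, List.flatMap_cons]
    rw [hces]
    have h1 := esum_stepT hnm (he t (List.mem_cons_self)) i
    have h2 := ih he'
    have : esum (t :: e) = |t.1| + esum e := by simp [esum]
    rw [this, mul_add]
    exact add_le_add h1 h2

lemma esum_run {m : ℕ} :
    ∀ (l : List (Fin d)) {e : List (Term d)} {n : ℕ}, Good n e → n + l.length ≤ m →
      esum (run l e) ≤ ((2 * m + 1 : ℝ)) ^ l.length * esum e := by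
  intro l
  induction l with
  | nil => intro e n _ _; simp [run]
  | cons i l ih =>
    intro e n he hnl
    have h1 : esum (run l (stepE i e)) ≤ ((2 * m + 1 : ℝ)) ^ l.length * esum (stepE i e) := by
      refine ih (good_stepE he i) ?_
      simp only [List.length_cons] at hnl; omega
    have h2 : esum (stepE i e) ≤ (2 * m + 1) * esum e := by
      refine esum_stepE ?_ he i
      simp only [List.length_cons] at hnl; omega
    have hpow : (0 : ℝ) ≤ ((2 * m + 1 : ℝ)) ^ l.length := by positivity
    calc esum (run (i :: l) e) = esum (run l (stepE i e)) := rfl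
      _ ≤ ((2 * m + 1 : ℝ)) ^ l.length * esum (stepE i e) := h1
      _ ≤ ((2 * m + 1 : ℝ)) ^ l.length * ((2 * m + 1) * esum e) := by
          exact mul_le_mul_of_nonneg_left h2 hpow
      _ = ((2 * m + 1 : ℝ)) ^ (i :: l).length * esum e := by
          simp [pow_succ]; ring

/-! ### Analytic lemmas -/

lemma pderivList_append (U : Set (EucSp d)) (f : EucSp d → ℝ) (l₁ l₂ : List (Fin d)) :
    pderivList U (l₁ ++ l₂) f = pderivList U l₂ (pderivList U l₁ f) := by
  induction l₁ generalizing f with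
  | nil => simp [pderivList]
  | cons i l₁ ih => simp [pderivList, ih]

lemma pderivList_congr {U : Set (EucSp d)} {g h : EucSp d → ℝ} (hgh : Set.EqOn g h U) :
    ∀ l : List (Fin d), Set.EqOn (pderivList U l g) (pderivList U l h) U := by
  intro l
  induction l generalizing g h with
  | nil => exact hgh
  | cons i l ih =>
    have : Set.EqOn (pderivOn U i g) (pderivOn U i h) U := by
      intro x hx
      have hcongr : fderivWithin ℝ g U x = fderivWithin ℝ h U x :=
        fderivWithin_congr hgh (hgh hx)
      simp only [pderivOn, hcongr]
    exact ih this

lemma contDiffOn_pderivOn {U : Set (EucSp d)} (hU : IsOpen U) {f : EucSp d → ℝ} {n : ℕ}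
    (hf : ContDiffOn ℝ (n + 1 : ℕ) f U) (i : Fin d) :
    ContDiffOn ℝ (n : ℕ) (pderivOn U i f) U := by
  have h1 : ContDiffOn ℝ (n : ℕ) (fderiv ℝ f) U := by
    refine hf.fderiv_of_isOpen hU ?_
    exact_mod_cast le_rfl
  have h2 : ContDiffOn ℝ (n : ℕ) (fun x => fderiv ℝ f x (EuclideanSpace.single i 1)) U :=
    h1.clm_apply contDiffOn_const
  refine h2.congr fun x hx => ?_
  rw [pderivOn, fderivWithin_of_isOpen hU hx]

lemma contDiffOn_pderivList {U : Set (EucSp d)} (hU : IsOpen U) {f : EucSp d → ℝ} :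
    ∀ (l : List (Fin d)) (n : ℕ), ContDiffOn ℝ (l.length + n : ℕ) f U →
      ContDiffOn ℝ (n : ℕ) (pderivList U l f) U := by
  intro l
  induction l generalizing f with
  | nil => intro n hf; simpa [pderivList] using hf
  | cons i l ih =>
    intro n hf
    have hnat : (i :: l).length + n = (l.length + n) + 1 := by
      simp [List.length_cons]; omega
    rw [hnat] at hf
    exact ih n (contDiffOn_pderivOn hU hf i)

lemma diffAt_pderivList {U : Set (EucSp d)} (hU : IsOpen U) {f : EucSp d → ℝ} {m : ℕ}
    (hf : ContDiffOn ℝ (m : ℕ) f U) {l : List (Fin d)} (hl : l.length + 1 ≤ m)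
    {x : EucSp d} (hx : x ∈ U) : DifferentiableAt ℝ (pderivList U l f) x := by
  have h0 : ContDiffOn ℝ (l.length + 1 : ℕ) f U := by
    refine hf.of_le ?_; exact_mod_cast hl
  have h1 : ContDiffOn ℝ (1 : ℕ) (pderivList U l f) U := contDiffOn_pderivList hU l 1 h0
  have h2 : DifferentiableOn ℝ (pderivList U l f) U := by
    refine h1.differentiableOn ?_; simp
  exact h2.differentiableAt (hU.mem_nhds hx)

lemma diffAt_prodL {U : Set (EucSp d)} (hU : IsOpen U) {f : EucSp d → ℝ} {m : ℕ}
    (hf : ContDiffOn ℝ (m : ℕ) f U) {L : List (List (Fin d))}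
    (hL : ∀ l ∈ L, l.length + 1 ≤ m) {x : EucSp d} (hx : x ∈ U) :
    DifferentiableAt ℝ (prodL U f L) x := by
  induction L with
  | nil =>
    have : prodL U f ([] : List (List (Fin d))) = fun _ => (1 : ℝ) := by
      funext y; simp [prodL]
    rw [this]; exact differentiableAt_const 1
  | cons l L ih =>
    have heq : prodL U f (l :: L) = fun y => pderivList U l f y * prodL U f L y := by
      funext y; simp [prodL]
    rw [heq]
    exact (diffAt_pderivList hU hf (hL l (List.mem_cons_self)) hx).mul
      (ih fun l' hl' => hL l' (List.mem_cons_of_mem _ hl'))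

lemma pderivOn_congr_fun {U : Set (EucSp d)} {g h : EucSp d → ℝ} (hgh : g = h) (i : Fin d) :
    pderivOn U i g = pderivOn U i h := by rw [hgh]

lemma pderivOn_mul {U : Set (EucSp d)} (hU : IsOpen U) {g h : EucSp d → ℝ} {x : EucSp d}
    (hx : x ∈ U) (hg : DifferentiableAt ℝ g x) (hh : DifferentiableAt ℝ h x) (i : Fin d) :
    pderivOn U i (fun y => g y * h y) x = pderivOn U i g x * h x + g x * pderivOn U i h x := by
  simp only [pderivOn, fderivWithin_of_isOpen hU hx]
  rw [fderiv_fun_mul hg hh]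
  simp
  ring

lemma pderivOn_const_mul {U : Set (EucSp d)} (hU : IsOpen U) {g : EucSp d → ℝ} {x : EucSp d}
    (hx : x ∈ U) (hg : DifferentiableAt ℝ g x) (c : ℝ) (i : Fin d) :
    pderivOn U i (fun y => c * g y) x = c * pderivOn U i g x := by
  simp only [pderivOn, fderivWithin_of_isOpen hU hx]
  rw [fderiv_const_mul hg c]
  simp

lemma pderivOn_add {U : Set (EucSp d)} (hU : IsOpen U) {g h : EucSp d → ℝ} {x : EucSp d}
    (hx : x ∈ U) (hg : DifferentiableAt ℝ g x) (hh : DifferentiableAt ℝ h x) (i : Fin d) :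
    pderivOn U i (fun y => g y + h y) x = pderivOn U i g x + pderivOn U i h x := by
  simp only [pderivOn, fderivWithin_of_isOpen hU hx]
  rw [fderiv_fun_add hg hh]
  simp

lemma pderivOn_rpow {U : Set (EucSp d)} (hU : IsOpen U) {f : EucSp d → ℝ} {x : EucSp d}
    (hx : x ∈ U) (hf : DifferentiableAt ℝ f x) (hne : f x ≠ 0) (p : ℝ) (i : Fin d) :
    pderivOn U i (fun y => f y ^ p) x = p * f x ^ (p - 1) * pderivOn U i f x := by
  simp only [pderivOn, fderivWithin_of_isOpen hU hx]
  rw [(hf.hasFDerivAt.rpow_const (Or.inl hne)).fderiv]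
  simp [mul_assoc]

lemma pderivOn_prodL {U : Set (EucSp d)} (hU : IsOpen U) {f : EucSp d → ℝ} {m : ℕ}
    (hf : ContDiffOn ℝ (m : ℕ) f U) (i : Fin d) :
    ∀ (L : List (List (Fin d))), (∀ l ∈ L, l.length + 1 ≤ m) → ∀ x ∈ U,
      pderivOn U i (prodL U f L) x = ((stepL i L).map fun L' => prodL U f L' x).sum := by
  intro L
  induction L with
  | nil =>
    intro _ x hx
    have h1 : prodL U f ([] : List (List (Fin d))) = fun _ => (1 : ℝ) := by
      funext y; simp [prodL]
    rw [h1]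
    simp only [pderivOn, fderivWithin_of_isOpen hU hx]
    simp [stepL]
  | cons l L ih =>
    intro hL x hx
    have hl1 : l.length + 1 ≤ m := hL l (List.mem_cons_self)
    have hL' : ∀ l' ∈ L, l'.length + 1 ≤ m := fun l' hl' => hL l' (List.mem_cons_of_mem _ hl')
    have heq : prodL U f (l :: L) = fun y => pderivList U l f y * prodL U f L y := by
      funext y; simp [prodL]
    rw [heq, pderivOn_mul hU hx (diffAt_pderivList hU hf hl1 hx) (diffAt_prodL hU hf hL' hx) i]
    have hhead : pderivOn U i (pderivList U l f) x = pderivList U (l ++ [i]) f x := by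
      rw [pderivList_append]; rfl
    rw [hhead, ih hL' x hx]
    simp only [stepL, List.map_cons, List.sum_cons, List.map_map]
    have hcomp : ((stepL i L).map ((fun L' => prodL U f L' x) ∘ fun L' => l :: L')).sum
        = pderivList U l f x * ((stepL i L).map fun L' => prodL U f L' x).sum := by
      have h0 : ((stepL i L).map ((fun L' => prodL U f L' x) ∘ fun L' => l :: L'))
          = ((stepL i L).map fun L' => pderivList U l f x * prodL U f L' x) :=
        List.map_congr_left fun L' _ => by simp [Function.comp, prodL]
      rw [h0, List.sum_map_mul_left]
    rw [hcomp]
    have : prodL U f ((l ++ [i]) :: L) x = pderivList U (l ++ [i]) f x * prodL U f L x := by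
      simp [prodL]
    rw [this]

lemma eval_cons (U : Set (EucSp d)) (f : EucSp d → ℝ) (t : Term d) (e : List (Term d))
    (x : EucSp d) : eval U f (t :: e) x = tval U f t x + eval U f e x := by
  simp [eval]

lemma diffAt_tval {U : Set (EucSp d)} (hU : IsOpen U) {f : EucSp d → ℝ} {m : ℕ} (hm : 1 ≤ m)
    (hf : ContDiffOn ℝ (m : ℕ) f U) (hpos : ∀ x ∈ U, 0 < f x) {t : Term d} {n : ℕ}
    (ht : GoodT n t) (hnm : n + 1 ≤ m) {x : EucSp d} (hx : x ∈ U) :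
    DifferentiableAt ℝ (tval U f t) x := by
  obtain ⟨c, k, L⟩ := t
  have hfd : DifferentiableAt ℝ f x := by
    have := diffAt_pderivList hU hf (l := []) (by simpa using hm) hx
    simpa [pderivList] using this
  have h1 : DifferentiableAt ℝ (fun y => f y ^ ((1 : ℝ) / 2 - (k : ℝ))) x :=
    hfd.rpow_const (Or.inl (ne_of_gt (hpos x hx)))
  have h2 : DifferentiableAt ℝ (prodL U f L) x :=
    diffAt_prodL hU hf (fun l hl => by have := ht.2.2 l hl; omega) hx
  have : tval U f (c, k, L) = fun y => c * (f y ^ ((1 : ℝ) / 2 - (k : ℝ)) * prodL U f L y) := by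
    funext y; rfl
  rw [this]
  exact (h1.mul h2).const_mul c

lemma diffAt_eval {U : Set (EucSp d)} (hU : IsOpen U) {f : EucSp d → ℝ} {m : ℕ} (hm : 1 ≤ m)
    (hf : ContDiffOn ℝ (m : ℕ) f U) (hpos : ∀ x ∈ U, 0 < f x) {e : List (Term d)} {n : ℕ}
    (he : Good n e) (hnm : n + 1 ≤ m) {x : EucSp d} (hx : x ∈ U) :
    DifferentiableAt ℝ (eval U f e) x := by
  induction e with
  | nil =>
    have : eval U f ([] : List (Term d)) = fun _ => (0 : ℝ) := by funext y; simp [eval]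
    rw [this]; exact differentiableAt_const 0
  | cons t e ih =>
    have heq : eval U f (t :: e) = fun y => tval U f t y + eval U f e y := by
      funext y; simp [eval]
    rw [heq]
    exact (diffAt_tval hU hm hf hpos (he t (List.mem_cons_self)) hnm hx).add
      (ih fun t' ht' => he t' (List.mem_cons_of_mem _ ht'))

lemma pderivOn_tval {U : Set (EucSp d)} (hU : IsOpen U) {f : EucSp d → ℝ} {m : ℕ} (hm : 1 ≤ m)
    (hf : ContDiffOn ℝ (m : ℕ) f U) (hpos : ∀ x ∈ U, 0 < f x) {t : Term d} {n : ℕ}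
    (ht : GoodT n t) (hnm : n + 1 ≤ m) (i : Fin d) {x : EucSp d} (hx : x ∈ U) :
    pderivOn U i (tval U f t) x = eval U f (stepT i t) x := by
  obtain ⟨c, k, L⟩ := t
  have hfd : DifferentiableAt ℝ f x := by
    have := diffAt_pderivList hU hf (l := []) (by simpa using hm) hx
    simpa [pderivList] using this
  have hLlen : ∀ l ∈ L, l.length + 1 ≤ m := fun l hl => by have := ht.2.2 l hl; omega
  have h1 : DifferentiableAt ℝ (fun y => f y ^ ((1 : ℝ) / 2 - (k : ℝ))) x :=
    hfd.rpow_const (Or.inl (ne_of_gt (hpos x hx)))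
  have h2 : DifferentiableAt ℝ (prodL U f L) x := diffAt_prodL hU hf hLlen hx
  have heq : tval U f (c, k, L)
      = fun y => c * (f y ^ ((1 : ℝ) / 2 - (k : ℝ)) * prodL U f L y) := by
    funext y; rfl
  rw [heq, pderivOn_const_mul (g := fun y => f y ^ ((1 : ℝ) / 2 - (k : ℝ)) * prodL U f L y) hU hx
    (h1.mul h2) c i,
    pderivOn_mul hU hx h1 h2 i,
    pderivOn_rpow hU hx hfd (ne_of_gt (hpos x hx)) _ i,
    pderivOn_prodL hU hf i L hLlen x hx]
  -- now both sides are explicit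
  simp only [eval, stepT, List.map_cons, List.sum_cons, List.map_map]
  have hcomp : ((stepL i L).map ((fun t' => tval U f t' x) ∘ fun L' => ((c, k, L') : Term d))).sum
      = c * (f x ^ ((1 : ℝ) / 2 - (k : ℝ)) * ((stepL i L).map fun L' => prodL U f L' x).sum) := by
    have h0 : ((stepL i L).map ((fun t' => tval U f t' x) ∘ fun L' => ((c, k, L') : Term d)))
        = ((stepL i L).map fun L' =>
            (c * f x ^ ((1 : ℝ) / 2 - (k : ℝ))) * prodL U f L' x) := by
      apply List.map_congr_left
      intro L' _
      simp only [Function.comp, tval]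
      ring
    rw [h0, List.sum_map_mul_left, mul_assoc]
  rw [hcomp]
  have htv : tval U f (c * ((1 : ℝ) / 2 - (k : ℝ)), k + 1, [i] :: L) x
      = c * ((1 : ℝ) / 2 - (k : ℝ)) *
        (f x ^ ((1 : ℝ) / 2 - ((k : ℝ) + 1)) * (pderivOn U i f x * prodL U f L x)) := by
    simp only [tval, prodL, List.map_cons, List.prod_cons]
    have : pderivList U ([i]) f x = pderivOn U i f x := rfl
    rw [this]
    norm_num
  rw [htv]
  have hexp : (1 : ℝ) / 2 - (k : ℝ) - 1 = (1 : ℝ) / 2 - ((k : ℝ) + 1) := by ring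
  rw [hexp]
  ring

lemma pderivOn_eval {U : Set (EucSp d)} (hU : IsOpen U) {f : EucSp d → ℝ} {m : ℕ} (hm : 1 ≤ m)
    (hf : ContDiffOn ℝ (m : ℕ) f U) (hpos : ∀ x ∈ U, 0 < f x) {e : List (Term d)} {n : ℕ}
    (he : Good n e) (hnm : n + 1 ≤ m) (i : Fin d) {x : EucSp d} (hx : x ∈ U) :
    pderivOn U i (eval U f e) x = eval U f (stepE i e) x := by
  induction e with
  | nil =>
    have h0 : eval U f ([] : List (Term d)) = fun _ => (0 : ℝ) := by funext y; simp [eval]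
    rw [h0]
    simp only [pderivOn, fderivWithin_of_isOpen hU hx]
    simp [stepE, eval]
  | cons t e ih =>
    have het : GoodT n t := he t (List.mem_cons_self)
    have hee : Good n e := fun t' ht' => he t' (List.mem_cons_of_mem _ ht')
    have heq : eval U f (t :: e) = fun y => tval U f t y + eval U f e y := by
      funext y; simp [eval]
    rw [heq, pderivOn_add hU hx (diffAt_tval hU hm hf hpos het hnm hx)
      (diffAt_eval hU hm hf hpos hee hnm hx) i,
      pderivOn_tval hU hm hf hpos het hnm i hx, ih hee]
    simp [stepE, eval, List.flatMap_cons]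

lemma pderivList_eval {U : Set (EucSp d)} (hU : IsOpen U) {f : EucSp d → ℝ} {m : ℕ} (hm : 1 ≤ m)
    (hf : ContDiffOn ℝ (m : ℕ) f U) (hpos : ∀ x ∈ U, 0 < f x) :
    ∀ (l : List (Fin d)) (e : List (Term d)) (n : ℕ), Good n e → n + l.length ≤ m →
      ∀ x ∈ U, pderivList U l (eval U f e) x = eval U f (run l e) x := by
  intro l
  induction l with
  | nil => intro e n _ _ x _; rfl
  | cons i l ih =>
    intro e n he hnl x hx
    have hn1 : n + 1 ≤ m := by simp only [List.length_cons] at hnl; omega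
    have hEq : Set.EqOn (pderivOn U i (eval U f e)) (eval U f (stepE i e)) U :=
      fun y hy => pderivOn_eval hU hm hf hpos he hn1 i hy
    have : pderivList U (i :: l) (eval U f e) x = pderivList U l (pderivOn U i (eval U f e)) x :=
      rfl
    rw [this, pderivList_congr hEq l hx]
    have : (n + 1) + l.length ≤ m := by simp only [List.length_cons] at hnl; omega
    exact ih (stepE i e) (n + 1) (good_stepE he i) this x hx


/-! ### Bounds -/

lemma good_mono {n n' : ℕ} (h : n ≤ n') {e : List (Term d)} (he : Good n e) : Good n' e :=
  fun t ht => (he t ht).mono h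

lemma rpow_bound {a₁ M' fx : ℝ} (ha₁ : 0 < a₁) (hM' : 1 ≤ M') (hlb : a₁ ≤ fx) (hub : fx ≤ M')
    {k m : ℕ} (hk : k ≤ m) :
    fx ^ ((1 : ℝ) / 2 - (k : ℝ)) ≤
      max (Real.sqrt M') ((min a₁ 1) ^ ((1 : ℝ) / 2 - (m : ℝ))) := by
  have hfx : 0 < fx := lt_of_lt_of_le ha₁ hlb
  rcases Nat.eq_zero_or_pos k with rfl | hk1
  · have : fx ^ ((1 : ℝ) / 2 - ((0 : ℕ) : ℝ)) = Real.sqrt fx := by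
      rw [Real.sqrt_eq_rpow]; norm_num
    rw [this]
    exact le_trans (Real.sqrt_le_sqrt hub) (le_max_left _ _)
  · set p : ℝ := (1 : ℝ) / 2 - (k : ℝ) with hp
    have hk1' : (1 : ℝ) ≤ (k : ℝ) := by exact_mod_cast hk1
    have hp0 : p ≤ 0 := by rw [hp]; linarith
    have hb : 0 < min a₁ 1 := lt_min ha₁ one_pos
    have h1 : fx ^ p ≤ a₁ ^ p := Real.rpow_le_rpow_of_nonpos ha₁ hlb hp0
    have h2 : a₁ ^ p ≤ (min a₁ 1) ^ p :=
      Real.rpow_le_rpow_of_nonpos hb (min_le_left _ _) hp0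
    have h3 : (min a₁ 1) ^ p ≤ (min a₁ 1) ^ ((1 : ℝ) / 2 - (m : ℝ)) := by
      refine Real.rpow_le_rpow_of_exponent_ge hb (min_le_right _ _) ?_
      have : (k : ℝ) ≤ (m : ℝ) := by exact_mod_cast hk
      linarith
    exact le_trans h1 (le_trans h2 (le_trans h3 (le_max_right _ _)))

lemma abs_prodL_le {U : Set (EucSp d)} {f : EucSp d → ℝ} {m : ℕ} {M : ℝ}
    (hder : ∀ l : List (Fin d), l.length ≤ m → ∀ x ∈ U, |pderivList U l f x| ≤ M)
    {x : EucSp d} (hx : x ∈ U) :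
    ∀ L : List (List (Fin d)), (∀ l ∈ L, l.length ≤ m) →
      |prodL U f L x| ≤ (max M 1) ^ L.length := by
  intro L
  induction L with
  | nil => intro _; simp [prodL]
  | cons l L ih =>
    intro hL
    have h1 : |pderivList U l f x| ≤ max M 1 :=
      le_trans (hder l (hL l (List.mem_cons_self)) x hx) (le_max_left _ _)
    have h2 : |prodL U f L x| ≤ (max M 1) ^ L.length :=
      ih fun l' hl' => hL l' (List.mem_cons_of_mem _ hl')
    have heq : prodL U f (l :: L) x = pderivList U l f x * prodL U f L x := by simp [prodL]
    rw [heq, abs_mul]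
    calc |pderivList U l f x| * |prodL U f L x|
        ≤ (max M 1) * (max M 1) ^ L.length := by
          refine mul_le_mul h1 h2 (abs_nonneg _) ?_
          exact le_trans zero_le_one (le_max_right _ _)
      _ = (max M 1) ^ (l :: L).length := by rw [List.length_cons, pow_succ]; ring

lemma abs_tval_le {U : Set (EucSp d)} {f : EucSp d → ℝ} {m : ℕ} {M a₁ : ℝ}
    (ha₁ : 0 < a₁) (hlb : ∀ x ∈ U, a₁ ≤ f x)
    (hder : ∀ l : List (Fin d), l.length ≤ m → ∀ x ∈ U, |pderivList U l f x| ≤ M)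
    {t : Term d} (ht : GoodT m t) {x : EucSp d} (hx : x ∈ U) :
    |tval U f t x| ≤ |t.1| *
      (max (Real.sqrt (max M 1)) ((min a₁ 1) ^ ((1 : ℝ) / 2 - (m : ℝ))) * (max M 1) ^ m) := by
  obtain ⟨c, k, L⟩ := t
  obtain ⟨hk, hL, hl⟩ := ht
  have hM' : (1 : ℝ) ≤ max M 1 := le_max_right _ _
  have hub : f x ≤ max M 1 := by
    have := hder [] (by simp) x hx
    have hfl : pderivList U ([] : List (Fin d)) f x = f x := rfl
    rw [hfl] at this
    exact le_trans (le_abs_self _) (le_trans this (le_max_left _ _))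
  have hfx : 0 < f x := lt_of_lt_of_le ha₁ (hlb x hx)
  have h1 : |f x ^ ((1 : ℝ) / 2 - (k : ℝ))|
      ≤ max (Real.sqrt (max M 1)) ((min a₁ 1) ^ ((1 : ℝ) / 2 - (m : ℝ))) := by
    rw [abs_of_pos (Real.rpow_pos_of_pos hfx _)]
    exact rpow_bound ha₁ hM' (hlb x hx) hub hk
  have h2 : |prodL U f L x| ≤ (max M 1) ^ L.length := abs_prodL_le hder hx L hl
  have h3 : (max M 1) ^ L.length ≤ (max M 1) ^ m := pow_le_pow_right₀ hM' hL
  have htv : tval U f (c, k, L) x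
      = c * (f x ^ ((1 : ℝ) / 2 - (k : ℝ)) * prodL U f L x) := rfl
  rw [htv, abs_mul, abs_mul]
  refine mul_le_mul_of_nonneg_left ?_ (abs_nonneg c)
  refine mul_le_mul h1 (le_trans h2 h3) (abs_nonneg _) ?_
  exact le_trans (Real.sqrt_nonneg _) (le_max_left _ _)

lemma abs_eval_le {U : Set (EucSp d)} {f : EucSp d → ℝ} {x : EucSp d} {C : ℝ} :
    ∀ {e : List (Term d)}, (∀ t ∈ e, |tval U f t x| ≤ |t.1| * C) →
      |eval U f e x| ≤ esum e * C := by
  intro e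
  induction e with
  | nil => intro _; simp [eval, esum]
  | cons t e ih =>
    intro h
    have h1 : |tval U f t x| ≤ |t.1| * C := h t (List.mem_cons_self)
    have h2 : |eval U f e x| ≤ esum e * C := ih fun t' ht' => h t' (List.mem_cons_of_mem _ ht')
    have heq : eval U f (t :: e) x = tval U f t x + eval U f e x := eval_cons U f t e x
    have hes : esum (t :: e) = |t.1| + esum e := by simp [esum]
    rw [heq, hes, add_mul]
    exact le_trans (abs_add_le _ _) (add_le_add h1 h2)

end Stmt14Aux


/-- regularity transfer from `f` to `√f`: if `f` is `Cᵐ`, bounded below by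
`a₁ > 0`, with all partial derivatives of order `≤ m` bounded by `M`, then `√f` is `Cᵐ` with
all partial derivatives of order `≤ m` bounded by a constant depending only on `m, d, M, a₁`. -/
theorem statement14
    (d m : ℕ) (hm : 1 ≤ m) (M a₁ : ℝ) (ha₁ : 0 < a₁) :
    ∃ κ : ℝ, ∀ U : Set (EucSp d), IsOpen U → ∀ f : EucSp d → ℝ,
      ContDiffOn ℝ m f U → (∀ x ∈ U, a₁ ≤ f x) →
      (∀ l : List (Fin d), l.length ≤ m → ∀ x ∈ U, |pderivList U l f x| ≤ M) →
      ContDiffOn ℝ m (fun x => Real.sqrt (f x)) U ∧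
        ∀ l : List (Fin d), l.length ≤ m → ∀ x ∈ U,
          |pderivList U l (fun y => Real.sqrt (f y)) x| ≤ κ := by
  classical
  set M' : ℝ := max M 1 with hM'def
  set A : ℝ := max (Real.sqrt M') ((min a₁ 1) ^ ((1 : ℝ) / 2 - (m : ℝ))) with hAdef
  refine ⟨((2 * m + 1 : ℝ)) ^ m * (A * M' ^ m), ?_⟩
  intro U hU f hf hlb hbd
  have hpos : ∀ x ∈ U, 0 < f x := fun x hx => lt_of_lt_of_le ha₁ (hlb x hx)
  constructor
  · intro x hx
    exact ((Real.contDiffAt_sqrt (ne_of_gt (hpos x hx))).comp x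
      (hf.contDiffAt (hU.mem_nhds hx))).contDiffWithinAt
  · intro l hl x hx
    set e₀ : List (Stmt14Aux.Term d) := [((1 : ℝ), 0, ([] : List (List (Fin d))))] with he₀
    have hgood0 : Stmt14Aux.Good 0 e₀ := by
      intro t ht
      simp only [he₀, List.mem_singleton] at ht
      subst ht
      exact ⟨le_rfl, by simp, by simp⟩
    have hE : Set.EqOn (fun y => Real.sqrt (f y)) (Stmt14Aux.eval U f e₀) U := by
      intro y hy
      simp only [Stmt14Aux.eval, Stmt14Aux.tval, Stmt14Aux.prodL, he₀, List.map_cons,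
        List.map_nil, List.sum_cons, List.sum_nil, List.prod_nil, add_zero, mul_one, one_mul,
        Nat.cast_zero, sub_zero]
      rw [Real.sqrt_eq_rpow]
    rw [Stmt14Aux.pderivList_congr hE l hx,
      Stmt14Aux.pderivList_eval hU hm hf hpos l e₀ 0 hgood0 (by simpa using hl) x hx]
    have hgoodm : Stmt14Aux.Good m (Stmt14Aux.run l e₀) := by
      refine Stmt14Aux.good_mono ?_ (Stmt14Aux.good_run l hgood0)
      simpa using hl
    have hesum : Stmt14Aux.esum (Stmt14Aux.run l e₀) ≤ ((2 * m + 1 : ℝ)) ^ m := by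
      have h1 : Stmt14Aux.esum (Stmt14Aux.run l e₀)
          ≤ ((2 * m + 1 : ℝ)) ^ l.length * Stmt14Aux.esum e₀ :=
        Stmt14Aux.esum_run l hgood0 (by simpa using hl)
      have h2 : Stmt14Aux.esum e₀ = 1 := by simp [Stmt14Aux.esum, he₀]
      rw [h2, mul_one] at h1
      refine le_trans h1 (pow_le_pow_right₀ ?_ hl)
      have : (0 : ℝ) ≤ (m : ℝ) := Nat.cast_nonneg m
      linarith
    have hbound : |Stmt14Aux.eval U f (Stmt14Aux.run l e₀) x|
        ≤ Stmt14Aux.esum (Stmt14Aux.run l e₀) * (A * M' ^ m) := by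
      refine Stmt14Aux.abs_eval_le ?_
      intro t ht
      exact Stmt14Aux.abs_tval_le ha₁ hlb hbd (hgoodm t ht) hx
    have hC : (0 : ℝ) ≤ A * M' ^ m := by
      refine mul_nonneg ?_ (pow_nonneg ?_ m)
      · exact le_trans (Real.sqrt_nonneg _) (le_max_left _ _)
      · exact le_trans zero_le_one (le_max_right _ _)
    calc |Stmt14Aux.eval U f (Stmt14Aux.run l e₀) x|
        ≤ Stmt14Aux.esum (Stmt14Aux.run l e₀) * (A * M' ^ m) := hbound
      _ ≤ ((2 * m + 1 : ℝ)) ^ m * (A * M' ^ m) := mul_le_mul_of_nonneg_right hesum hC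


end
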